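/- Change of variables solving (B.1) with b = −(8/9)a²: let a, c be complex scalars with a ≠ 0, and let V : ℝ → (k×k complex matrices) be twice differentiable satisfying V''(τ) = c [ V'(τ), V(τ) ] for all τ (primes denoting derivatives in τ). Define τ(t) := ( e^{2at/3} − 1 ) / (2a/3) and U(t) := e^{2at/3} V( τ(t) ). Then U satisfies Ü = 2a U̇ − (8/9) a² U + c [ U̇, U ]. -/

import Mathlib

open Matrix

attribute [local instance] Matrix.normedAddCommGroup Matrix.normedSpace

noncomputable section

/-!
With `μ = 2a/3` and `e(t) = e^{μt}` we have `τ' = e`, so `U = e · (V ∘ τ)` has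
`U̇ = e² V'(τ) + μ U`. Differentiating once more and eliminating `V'(τ)` through this formula gives
`Ü = 3μ U̇ − 2μ² U + e³ V''(τ)`, and `3μ = 2a`, `2μ² = (8/9)a²`. Finally the commutator is
homogeneous of degree three under the rescaling: `[U̇, U] = [e² V'(τ) + μ e V(τ), e V(τ)] =
e³ [V'(τ), V(τ)]`, since `[V, V] = 0`.
-/

theorem hasDerivAt_cexp_const_mul_ofReal (μ : ℂ) (t : ℝ) :
    HasDerivAt (fun t : ℝ => Complex.exp (μ * t)) (μ * Complex.exp (μ * t)) t := by
  simpa [mul_comm] using ((hasDerivAt_id t).ofReal_comp.const_mul μ).cexp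

theorem HasDerivAt.sub_one_div_of_hasDerivAt_eq_mul {e : ℝ → ℂ} {μ : ℂ} {t : ℝ}
    (he : HasDerivAt e (μ * e t) t) (hμ : μ ≠ 0) :
    HasDerivAt (fun t => (e t - 1) / μ) (e t) t := by
  simpa [mul_div_cancel_left₀ _ hμ] using (he.sub_const 1).div_const μ

section TimeChange

variable {E : Type*} [NormedAddCommGroup E] [NormedSpace ℂ E]
  {μ : ℂ} {e τ : ℝ → ℂ} {V V' W : ℂ → E}

theorem hasDerivAt_smul_comp_of_hasDerivAt_eq_mul
    (he : ∀ t, HasDerivAt e (μ * e t) t) (hτ : ∀ t, HasDerivAt τ (e t) t)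
    (hV : ∀ z, HasDerivAt V (V' z) z) (t : ℝ) :
    HasDerivAt (fun t => e t • V (τ t)) (e t ^ 2 • V' (τ t) + μ • (e t • V (τ t))) t := by
  refine ((he t).smul ((hV (τ t)).scomp t (hτ t))).congr_deriv ?_
  simp only [Function.comp_apply, smul_smul, sq]

theorem hasDerivAt_deriv_smul_comp_of_hasDerivAt_eq_mul
    (he : ∀ t, HasDerivAt e (μ * e t) t) (hτ : ∀ t, HasDerivAt τ (e t) t)
    (hV : ∀ z, HasDerivAt V (V' z) z) (hV' : ∀ z, HasDerivAt V' (W z) z) (t : ℝ) :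
    HasDerivAt (deriv fun t => e t • V (τ t))
      ((3 * μ) • deriv (fun t => e t • V (τ t)) t - (2 * μ ^ 2) • (e t • V (τ t))
        + e t ^ 3 • W (τ t)) t := by
  have hU := hasDerivAt_smul_comp_of_hasDerivAt_eq_mul he hτ hV
  rw [funext fun t => (hU t).deriv]
  have he2 : HasDerivAt (fun t => e t ^ 2) (2 * μ * e t ^ 2) t :=
    ((he t).pow 2).congr_deriv (by ring)
  refine ((he2.smul ((hV' (τ t)).scomp t (hτ t))).add ((hU t).const_smul μ)).congr_deriv ?_
  simp only [Function.comp_apply, smul_add, smul_smul]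
  match_scalars <;> ring

end TimeChange

theorem commutator_smul_add_smul {A : Type*} [Ring A] [Algebra ℂ A] (s μ : ℂ) (x y : A) :
    (s ^ 2 • y + μ • (s • x)) * (s • x) - (s • x) * (s ^ 2 • y + μ • (s • x))
      = s ^ 3 • (y * x - x * y) := by
  simp only [add_mul, mul_add, smul_mul_assoc, mul_smul_comm, smul_smul, smul_sub]
  match_scalars <;> ring

theorem change_of_variables_B6 (k : ℕ) (a c : ℂ) (ha : a ≠ 0)
    (V V' : ℂ → Matrix (Fin k) (Fin k) ℂ)
    (hV : ∀ τ : ℂ, HasDerivAt V (V' τ) τ)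
    (hV' : ∀ τ : ℂ, HasDerivAt V' (c • (V' τ * V τ - V τ * V' τ)) τ)
    (τ : ℝ → ℂ)
    (hτ : ∀ t : ℝ, τ t = (Complex.exp (2 * a * t / 3) - 1) / (2 * a / 3))
    (U : ℝ → Matrix (Fin k) (Fin k) ℂ)
    (hU : ∀ t : ℝ, U t = Complex.exp (2 * a * t / 3) • V (τ t)) :
    (∀ t, DifferentiableAt ℝ U t) ∧
    ∀ t : ℝ, HasDerivAt (deriv U)
      ((2 * a) • deriv U t - (8 / 9 * a ^ 2) • U t
        + c • (deriv U t * U t - U t * deriv U t)) t := by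
  have hexp : ∀ t : ℝ, Complex.exp (2 * a * t / 3) = Complex.exp (2 * a / 3 * t) := fun t => by
    rw [mul_div_right_comm]
  simp_rw [hexp] at hτ hU
  set μ : ℂ := 2 * a / 3 with hμ
  have he := hasDerivAt_cexp_const_mul_ofReal μ
  have hτ' : ∀ t : ℝ, HasDerivAt τ (Complex.exp (μ * t)) t := fun t => by
    rw [funext hτ]
    exact (he t).sub_one_div_of_hasDerivAt_eq_mul (by simpa [hμ] using ha)
  -- `deriv U` above is elaborated with the plain `Matrix` instances rather than the normed ones,
  -- so the derivatives are restated for `U` and only checked up to defeq against the lemmas.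
  have hU' : ∀ t : ℝ, HasDerivAt U (Complex.exp (μ * t) ^ 2 • V' (τ t) + μ • U t) t := fun t => by
    rw [funext hU]
    exact hasDerivAt_smul_comp_of_hasDerivAt_eq_mul he hτ' hV t
  have hU'' : ∀ t : ℝ, HasDerivAt (deriv U) ((3 * μ) • deriv U t - (2 * μ ^ 2) • U t
      + Complex.exp (μ * t) ^ 3 • c • (V' (τ t) * V (τ t) - V (τ t) * V' (τ t))) t := fun t => by
    rw [funext hU]
    exact hasDerivAt_deriv_smul_comp_of_hasDerivAt_eq_mul he hτ' hV hV' t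
  have hcomm : ∀ t : ℝ, deriv U t * U t - U t * deriv U t
      = Complex.exp (μ * t) ^ 3 • (V' (τ t) * V (τ t) - V (τ t) * V' (τ t)) := fun t => by
    rw [show deriv U t = _ from (hU' t).deriv, hU t]
    exact commutator_smul_add_smul _ _ _ _
  refine ⟨fun t => (hU' t).differentiableAt, fun t => (hU'' t).congr_deriv ?_⟩
  rw [hcomm, smul_comm c, show 3 * μ = 2 * a by ring, show 2 * μ ^ 2 = 8 / 9 * a ^ 2 by ring]
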